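/- There exists k₀ such that for every integer k ≥ k₀ the following holds: if G is a finite additive abelian group with gcd(|G|, 6) = 1 and X, Y ⊆ G are distinct dissociated sets with |X| = |Y| = k, then |E[X] ∩ E[Y]| ≤ C(k,2) − k/2. -/

import Mathlib

open Finset

/-- The restricted sumset `E[X] = X +̂ X = {x + x' : x, x' ∈ X, x ≠ x'}`. -/
def EHat {G : Type*} [AddCommGroup G] [DecidableEq G] (X : Finset G) : Finset G :=
  ((X ×ˢ X).filter fun p => p.1 ≠ p.2).image fun p => p.1 + p.2

/-- A set `X` is dissociated: any two representations of an element as a sum of four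
elements of `X` agree up to permutation. -/
def Dissociated {G : Type*} [AddCommGroup G] (X : Finset G) : Prop :=
  ∀ x₁ x₂ x₃ x₄ y₁ y₂ y₃ y₄ : G, x₁ ∈ X → x₂ ∈ X → x₃ ∈ X → x₄ ∈ X →
    y₁ ∈ X → y₂ ∈ X → y₃ ∈ X → y₄ ∈ X →
    x₁ + x₂ + x₃ + x₄ = y₁ + y₂ + y₃ + y₄ →
    ({x₁, x₂, x₃, x₄} : Multiset G) = {y₁, y₂, y₃, y₄}

/-!
Dissociated sets are Sidon sets, so `E[X]` and `E[Y]` both have `C(k,2)` elements, and if the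
overlap exceeds `C(k,2) - k/2` then fewer than `k/2` sums of `X` lie outside `E[Y]`. Each such sum
has only two representations, so some `x₀ ∈ X` has all its sums `x₀ + w` in `E[Y]`, and any two
`z₁, z₂ ∈ X` have many common partners `w` with `z₁ + w, z₂ + w ∈ E[Y]`. Comparing the
representations in `Y` of `(x₀ + w) + (z + w') = (x₀ + w') + (z + w)` via dissociativity shows
that all the `x₀ + w` have a common summand `γ ∈ Y`, i.e. `X \ {x₀}` translated by `c = x₀ - γ`
lies in `Y`.

If `c = 0`, then `Y` is `X` with `x₀` swapped for one new element `b`, and the sums `x₀ + s ∈ E[Y]`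
must all be of the form `b + t`, which the Sidon property of `X` forbids. If `c ≠ 0`, then
`E[X \ {x₀}] + 2c ⊆ E[Y]` with `2c ≠ 0` since `|G|` is odd; as `E[X]` contains no three-term
progression, at most half of `E[X]` lies in `E[X] - 2c`, whence
`C(k-1,2) ≤ C(k,2)/2 + |E[Y] \ E[X]| < C(k,2)/2 + k/2`, which fails for `k ≥ 9`.
-/

theorem Multiset.pair_eq_pair_iff {α : Type*} {a b c d : α} :
    ({a, b} : Multiset α) = {c, d} ↔ a = c ∧ b = d ∨ a = d ∧ b = c := by
  simp only [Multiset.insert_eq_cons, Multiset.cons_eq_cons, Multiset.singleton_inj,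
    Multiset.singleton_eq_cons_iff]
  by_cases a = b <;> aesop

variable {G : Type*} [AddCommGroup G]

def IsSidon (X : Finset G) : Prop :=
  ∀ ⦃a b a' b' : G⦄, a ∈ X → b ∈ X → a' ∈ X → b' ∈ X → a + b = a' + b' →
    a = a' ∧ b = b' ∨ a = b' ∧ b = a'

theorem IsSidon.mono {X Y : Finset G} (hY : IsSidon Y) (h : X ⊆ Y) : IsSidon X :=
  fun _ _ _ _ ha hb ha' hb' => hY (h ha) (h hb) (h ha') (h hb')

theorem Dissociated.isSidon {X : Finset G} (hX : Dissociated X) : IsSidon X := by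
  intro a b a' b' ha hb ha' hb' hsum
  have key : ({a, b} : Multiset G) + {a, a} = {a', b'} + {a, a} := by
    simpa only [Multiset.insert_eq_cons, Multiset.cons_add, Multiset.singleton_add] using
      hX a b a a a' b' a a ha hb ha ha ha' hb' ha ha (by rw [hsum])
  exact Multiset.pair_eq_pair_iff.1 (add_right_cancel key)

theorem IsSidon.eq_of_forall_add_sub_mem {Y W : Finset G} (hY : IsSidon Y) {a γ₁ γ₂ : G}
    (hW : 1 < W.card) (hγ₁ : γ₁ ∈ Y) (hγ₂ : γ₂ ∈ Y) (h₁ : ∀ w ∈ W, a + w - γ₁ ∈ Y)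
    (h₂ : ∀ w ∈ W, a + w - γ₂ ∈ Y) : γ₁ = γ₂ := by
  have split : ∀ w ∈ W, γ₁ = γ₂ ∨ γ₁ = a + w - γ₂ := fun w hw =>
    (hY hγ₁ (h₁ w hw) hγ₂ (h₂ w hw) (by abel)).imp And.left And.left
  obtain ⟨w, hw, w', hw', hne⟩ := one_lt_card.1 hW
  rcases split w hw with h | h
  · exact h
  rcases split w' hw' with h' | h'
  · exact h'
  exact absurd (by simpa using h.symm.trans h') hne

theorem Dissociated.add_sub_eq_of_common_summands {Y : Finset G} (hY : Dissociated Y)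
    {a b v v' β β' : G} (hab : a ≠ b) (hβ : β ∈ Y) (hβ' : β' ∈ Y) (hav : a + v - β ∈ Y)
    (hbv : b + v - β ∈ Y) (hav' : a + v' - β' ∈ Y) (hbv' : b + v' - β' ∈ Y) :
    a + v - β = a + v' - β' := by
  have key : ({a + v - β, b + v' - β'} : Multiset G) + {β, β'} =
      {a + v' - β', b + v - β} + {β, β'} := by
    simpa only [Multiset.insert_eq_cons, Multiset.cons_add, Multiset.singleton_add] using
      hY _ _ β β' _ _ β β' hav hbv' hβ hβ' hav' hbv hβ hβ' (by abel)
  -- `a + v - β ≠ b + v - β` rules out the crossed matching.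
  rcases Multiset.pair_eq_pair_iff.1 (add_right_cancel key) with ⟨h, -⟩ | ⟨h, -⟩
  · exact h
  · exact absurd (by simpa using h) hab

variable [DecidableEq G]

theorem mem_EHat {X : Finset G} {s : G} :
    s ∈ EHat X ↔ ∃ a ∈ X, ∃ b ∈ X, a ≠ b ∧ a + b = s := by
  simp [EHat, and_assoc]

theorem EHat_mono {X Y : Finset G} (h : X ⊆ Y) : EHat X ⊆ EHat Y := by
  intro s hs
  obtain ⟨a, ha, b, hb, hab, rfl⟩ := mem_EHat.1 hs
  exact mem_EHat.2 ⟨a, h ha, b, h hb, hab, rfl⟩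

theorem add_add_mem_EHat {X Y : Finset G} {c : G} (h : ∀ x ∈ X, x + c ∈ Y)
    {s : G} (hs : s ∈ EHat X) : s + (c + c) ∈ EHat Y := by
  obtain ⟨a, ha, b, hb, hab, rfl⟩ := mem_EHat.1 hs
  exact mem_EHat.2 ⟨a + c, h a ha, b + c, h b hb, by simpa using hab, by abel⟩

theorem IsSidon.card_EHat {X : Finset G} (hX : IsSidon X) :
    (EHat X).card = X.card.choose 2 := by
  let sum : Sym2 G → G := Sym2.lift ⟨(· + ·), add_comm⟩
  have hEHat : EHat X = (X.offDiag.image Sym2.mk.uncurry).image sum := by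
    ext s
    simp [mem_EHat, sum, and_assoc]
  rw [hEHat, card_image_of_injOn, Sym2.card_image_offDiag]
  rintro _ hp _ hq hsum
  obtain ⟨⟨a, b⟩, hab, rfl⟩ := mem_image.1 hp
  obtain ⟨⟨a', b'⟩, hab', rfl⟩ := mem_image.1 hq
  rw [mem_offDiag] at hab hab'
  exact Sym2.eq_iff.2 (hX hab.1 hab.2.1 hab'.1 hab'.2.1 hsum)

theorem Dissociated.threeAPFree_EHat {X : Finset G} (hX : Dissociated X) :
    ThreeAPFree (EHat X : Set G) := by
  intro s₁ h₁ s₂ h₂ s₃ h₃ h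
  obtain ⟨a, ha, b, hb, hab, rfl⟩ := mem_EHat.1 h₁
  obtain ⟨g, hg, g', hg', -, rfl⟩ := mem_EHat.1 h₂
  obtain ⟨e, he, f, hf, -, rfl⟩ := mem_EHat.1 h₃
  have H := hX a b e f g g' g g' ha hb he hf hg hg' hg hg' (by rw [add_assoc (a + b), h]; abel)
  have hamem : a ∈ ({g, g', g, g'} : Multiset G) := by rw [← H]; simp
  have hbmem : b ∈ ({g, g', g, g'} : Multiset G) := by rw [← H]; simp
  simp only [Multiset.insert_eq_cons, Multiset.mem_cons, Multiset.mem_singleton] at hamem hbmem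
  rcases hamem with rfl | rfl | rfl | rfl <;> rcases hbmem with rfl | rfl | rfl | rfl <;>
    first | exact absurd rfl hab | rfl | exact add_comm _ _

theorem ThreeAPFree.two_mul_card_filter_add_mem_le {S : Finset G}
    (hS : ThreeAPFree (S : Set G)) {d : G} (hd : d ≠ 0) :
    2 * (S.filter (· + d ∈ S)).card ≤ S.card := by
  set I := S.filter (· + d ∈ S)
  have hdisj : Disjoint I (I.image (· + d)) := by
    rw [disjoint_right]
    intro v hv hvI
    obtain ⟨w, hw, rfl⟩ := mem_image.1 hv
    simp only [I, mem_filter] at hw hvI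
    exact hd (by simpa using (hS hw.1 hw.2 hvI.2 (by abel)).symm)
  calc 2 * I.card = (I ∪ I.image (· + d)).card := by
        rw [card_union_of_disjoint hdisj, card_image_of_injective _ (add_left_injective d)]
        ring
    _ ≤ S.card := by
        refine card_le_card (union_subset (filter_subset _ _) fun v hv => ?_)
        obtain ⟨w, hw, rfl⟩ := mem_image.1 hv
        exact (mem_filter.1 hw).2

theorem card_EHat_le_of_add_mem {X X' Y : Finset G} (hX : ThreeAPFree (EHat X : Set G))
    (hX' : X' ⊆ X) {c : G} (hc : c + c ≠ 0) (hY : ∀ x ∈ X', x + c ∈ Y) :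
    2 * (EHat X').card ≤ (EHat X).card + 2 * (EHat Y \ EHat X).card := by
  have hin : (EHat X').filter (· + (c + c) ∈ EHat X) ⊆ (EHat X).filter (· + (c + c) ∈ EHat X) :=
    filter_subset_filter _ (EHat_mono hX')
  have hout : ((EHat X').filter (· + (c + c) ∉ EHat X)).card ≤ (EHat Y \ EHat X).card :=
    card_le_card_of_injOn (· + (c + c))
      (fun s hs => mem_sdiff.2 ⟨add_add_mem_EHat hY (mem_filter.1 hs).1, (mem_filter.1 hs).2⟩)
      (fun _ _ _ _ h => add_right_cancel h)
  have := card_filter_add_card_filter_not (s := EHat X') (p := (· + (c + c) ∈ EHat X))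
  have := hX.two_mul_card_filter_add_mem_le hc
  have := card_le_card hin
  omega

theorem IsSidon.exists_forall_add_notMem {X D : Finset G} (hX : IsSidon X)
    (hD : 2 * D.card < X.card) : ∃ x₀ ∈ X, ∀ w ∈ X.erase x₀, x₀ + w ∉ D := by
  by_contra! h
  choose! f hfX hfD using h
  obtain ⟨s, -, hs⟩ := exists_lt_card_fiber_of_mul_lt_card_of_maps_to
    (f := fun x => x + f x) hfD (by rwa [mul_comm] at hD)
  obtain ⟨x₁, hx₁, x₂, hx₂, x₃, hx₃, h₁₂, h₁₃, h₂₃⟩ := two_lt_card.1 hs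
  simp only [mem_filter] at hx₁ hx₂ hx₃
  have partner : ∀ {x x'}, x ∈ X → x' ∈ X → x ≠ x' → x + f x = x' + f x' → f x = x' :=
    fun hx hx' hne hsum => ((hX hx (mem_of_mem_erase (hfX _ hx)) hx'
      (mem_of_mem_erase (hfX _ hx')) hsum).resolve_left fun h => hne h.1).2
  exact h₂₃ ((partner hx₁.1 hx₂.1 h₁₂ (hx₁.2.trans hx₂.2.symm)).symm.trans
    (partner hx₁.1 hx₃.1 h₁₃ (hx₁.2.trans hx₃.2.symm)))

def partners (X Y : Finset G) (x₀ z : G) : Finset G :=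
  ((X.erase x₀).erase z).filter (z + · ∈ EHat Y)

theorem mem_partners {X Y : Finset G} {x₀ z w : G} :
    w ∈ partners X Y x₀ z ↔ w ≠ z ∧ w ≠ x₀ ∧ w ∈ X ∧ z + w ∈ EHat Y := by
  simp [partners, and_assoc]

theorem IsSidon.card_le_card_partners_inter {X Y : Finset G} (hX : IsSidon X) (x₀ : G)
    {z₁ z₂ : G} (hz₁ : z₁ ∈ X) (hz₂ : z₂ ∈ X) :
    X.card ≤ (partners X Y x₀ z₁ ∩ partners X Y x₀ z₂).card + (EHat X \ EHat Y).card + 3 := by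
  set B := ((X.erase z₁).erase z₂).filter fun w => z₁ + w ∉ EHat Y ∨ z₂ + w ∉ EHat Y
  -- A `w ∈ B` is sent to one of its sums missing from `E[Y]`; this is injective as `X` is Sidon.
  have hB : B.card ≤ (EHat X \ EHat Y).card := by
    refine card_le_card_of_injOn (fun w => if z₁ + w ∈ EHat Y then z₂ + w else z₁ + w) ?_ ?_
    · intro w hw
      simp only [B, coe_filter, mem_erase, Set.mem_ofPred_eq] at hw
      obtain ⟨⟨hw₂, hw₁, hw⟩, hbad⟩ := hw
      dsimp only
      split_ifs with h
      · exact mem_sdiff.2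
          ⟨mem_EHat.2 ⟨z₂, hz₂, w, hw, hw₂.symm, rfl⟩, hbad.resolve_left (not_not.2 h)⟩
      · exact mem_sdiff.2 ⟨mem_EHat.2 ⟨z₁, hz₁, w, hw, hw₁.symm, rfl⟩, h⟩
    · intro w hw w' hw' h
      simp only [B, coe_filter, mem_erase, Set.mem_ofPred_eq] at hw hw'
      have cancel : ∀ {z z'}, z ∈ X → z' ∈ X → w' ≠ z → z + w = z' + w' → w = w' :=
        fun hz hz' hne h =>
          ((hX hz hw.1.2.2 hz' hw'.1.2.2 h).resolve_right fun h' => hne h'.1.symm).2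
      dsimp only at h
      split_ifs at h
      · exact cancel hz₂ hz₂ hw'.1.1 h
      · exact cancel hz₂ hz₁ hw'.1.1 h
      · exact cancel hz₁ hz₂ hw'.1.2.1 h
      · exact cancel hz₁ hz₁ hw'.1.2.1 h
  have hcover : ((X.erase x₀).erase z₁).erase z₂ ⊆
      (partners X Y x₀ z₁ ∩ partners X Y x₀ z₂) ∪ B := by
    intro w hw
    simp only [partners, B, mem_union, mem_inter, mem_filter, mem_erase] at hw ⊢
    tauto
  have := card_le_card hcover
  have := card_union_le (partners X Y x₀ z₁ ∩ partners X Y x₀ z₂) B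
  have := pred_card_le_card_erase (s := X) (a := x₀)
  have := pred_card_le_card_erase (s := X.erase x₀) (a := z₁)
  have := pred_card_le_card_erase (s := (X.erase x₀).erase z₁) (a := z₂)
  omega

theorem Dissociated.exists_common_summand {Y : Finset G} (hY : Dissociated Y) {s t s' t' : G}
    (hs : s ∈ EHat Y) (ht : t ∈ EHat Y) (hs' : s' ∈ EHat Y) (ht' : t' ∈ EHat Y)
    (hsum : s + t' = s' + t) (hss' : s ≠ s') : ∃ β ∈ Y, s - β ∈ Y ∧ t - β ∈ Y := by
  obtain ⟨e₁, he₁, e₂, he₂, he, rfl⟩ := mem_EHat.1 hs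
  obtain ⟨q₁, hq₁, q₂, hq₂, -, rfl⟩ := mem_EHat.1 ht
  obtain ⟨e₁', he₁', e₂', he₂', -, rfl⟩ := mem_EHat.1 hs'
  obtain ⟨q₁', hq₁', q₂', hq₂', -, rfl⟩ := mem_EHat.1 ht'
  by_cases hq : e₁ = q₁ ∨ e₁ = q₂ ∨ e₂ = q₁ ∨ e₂ = q₂
  · rcases hq with rfl | rfl | rfl | rfl
    exacts [⟨e₁, he₁, by simpa, by simpa⟩, ⟨e₁, he₁, by simpa, by simpa⟩,
      ⟨e₂, he₂, by simpa, by simpa⟩, ⟨e₂, he₂, by simpa, by simpa⟩]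
  · -- Otherwise dissociativity makes both summands of `s` summands of `s'`, so `s = s'`.
    exfalso
    apply hss'
    have M := hY e₁ e₂ q₁' q₂' e₁' e₂' q₁ q₂ he₁ he₂ hq₁' hq₂' he₁' he₂' hq₁ hq₂
      (by simpa only [add_assoc] using hsum)
    have h₁ : e₁ ∈ ({e₁', e₂', q₁, q₂} : Multiset G) := M ▸ by simp
    have h₂ : e₂ ∈ ({e₁', e₂', q₁, q₂} : Multiset G) := M ▸ by simp
    simp only [Multiset.insert_eq_cons, Multiset.mem_cons, Multiset.mem_singleton] at h₁ h₂
    rcases h₁ with rfl | rfl | rfl | rfl <;> rcases h₂ with rfl | rfl | rfl | rfl <;>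
      simp_all [add_comm]

theorem Dissociated.exists_forall_add_sub_mem {Y W : Finset G} (hY : Dissociated Y) {a b : G}
    (hab : a ≠ b) (hW : 1 < W.card) (ha : ∀ w ∈ W, a + w ∈ EHat Y)
    (hb : ∀ w ∈ W, b + w ∈ EHat Y) : ∃ γ ∈ Y, ∀ w ∈ W, a + w - γ ∈ Y := by
  have summand : ∀ w ∈ W, ∃ β ∈ Y, a + w - β ∈ Y ∧ b + w - β ∈ Y := by
    intro w hw
    obtain ⟨w', hw', hne⟩ := W.exists_mem_ne hW w
    exact hY.exists_common_summand (ha w hw) (hb w hw) (ha w' hw') (hb w' hw') (by abel)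
      (by simpa using hne.symm)
  obtain ⟨w₀, hw₀⟩ := card_pos.1 (zero_lt_one.trans hW)
  obtain ⟨β₀, hβ₀, hγ₀, hα₀⟩ := summand w₀ hw₀
  refine ⟨a + w₀ - β₀, hγ₀, fun w hw => ?_⟩
  obtain ⟨β, hβ, hγ, hα⟩ := summand w hw
  rw [← hY.add_sub_eq_of_common_summands hab hβ hβ₀ hγ hα hγ₀ hα₀]
  simpa using hβ

theorem Dissociated.exists_forall_add_mem {X Y : Finset G} (hY : Dissociated Y) {x₀ : G}
    (hx₀ : ∀ w ∈ X.erase x₀, x₀ + w ∈ EHat Y)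
    (hN : ∀ z₁ ∈ X, ∀ z₂ ∈ X, 1 < (partners X Y x₀ z₁ ∩ partners X Y x₀ z₂).card) :
    ∃ c, ∀ x ∈ X.erase x₀, x + c ∈ Y := by
  have hN' : ∀ z ∈ X, 1 < (partners X Y x₀ z).card := fun z hz => by simpa using hN z hz z hz
  have hcenter : ∀ z ∈ X.erase x₀, ∃ γ ∈ Y, ∀ w ∈ partners X Y x₀ z, x₀ + w - γ ∈ Y :=
    fun z hz => hY.exists_forall_add_sub_mem (ne_of_mem_erase hz).symm
      (hN' z (mem_of_mem_erase hz))
      (fun w hw => hx₀ w (mem_erase.2 (And.imp_right And.left (mem_partners.1 hw).2)))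
      (fun w hw => (mem_partners.1 hw).2.2.2)
  choose! γ hγY hγ using hcenter
  -- Any two partner sets share two elements, so all the centres `γ z` agree.
  rcases (X.erase x₀).eq_empty_or_nonempty with hX₀ | ⟨z₀, hz₀⟩
  · exact ⟨0, by simp [hX₀]⟩
  refine ⟨x₀ - γ z₀, fun s hs => ?_⟩
  obtain ⟨w, hw⟩ := card_pos.1 (zero_lt_one.trans (hN' s (mem_of_mem_erase hs)))
  obtain ⟨hws, hwx₀, hwX, hsw⟩ := mem_partners.1 hw
  have hw₀ : w ∈ X.erase x₀ := mem_erase.2 ⟨hwx₀, hwX⟩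
  have hs' : s ∈ partners X Y x₀ w :=
    mem_partners.2 ⟨hws.symm, ne_of_mem_erase hs, mem_of_mem_erase hs, add_comm w s ▸ hsw⟩
  have hγw : γ w = γ z₀ := hY.isSidon.eq_of_forall_add_sub_mem
    (hN w hwX z₀ (mem_of_mem_erase hz₀)) (hγY w hw₀) (hγY z₀ hz₀)
    (fun v hv => hγ w hw₀ v (mem_inter.1 hv).1) (fun v hv => hγ z₀ hz₀ v (mem_inter.1 hv).2)
  convert hγ w hw₀ s hs' using 1
  rw [hγw]
  abel

theorem IsSidon.exists_add_notMem_EHat {X Y : Finset G} (hX : IsSidon X) {x₀ : G}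
    (hx₀ : x₀ ∈ X) (hx₀Y : x₀ ∉ Y) (hYX : (Y \ X).card ≤ 1) (hX₀ : 1 < (X.erase x₀).card) :
    ∃ s ∈ X.erase x₀, x₀ + s ∉ EHat Y := by
  by_contra! h
  -- `x₀ + s` is no sum of two elements of `X \ {x₀}`, so one summand lies in `Y \ X`.
  have hrep : ∀ s ∈ X.erase x₀, ∃ b ∈ Y \ X, x₀ + s - b ∈ X := by
    intro s hs
    obtain ⟨y, hy, t, ht, hyt, hsum⟩ := mem_EHat.1 (h s hs)
    by_cases hyX : y ∈ X
    · by_cases htX : t ∈ X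
      · exfalso
        rcases hX hx₀ (mem_of_mem_erase hs) hyX htX hsum.symm with ⟨rfl, -⟩ | ⟨rfl, -⟩
        exacts [hx₀Y hy, hx₀Y ht]
      · exact ⟨t, mem_sdiff.2 ⟨ht, htX⟩, by rwa [← hsum, add_sub_cancel_right]⟩
    · refine ⟨y, mem_sdiff.2 ⟨hy, hyX⟩, ?_⟩
      rw [← hsum, add_sub_cancel_left]
      by_contra htX
      exact hyt (card_le_one.1 hYX y (mem_sdiff.2 ⟨hy, hyX⟩) t (mem_sdiff.2 ⟨ht, htX⟩))
  obtain ⟨s₁, hs₁, s₂, hs₂, hne⟩ := one_lt_card.1 hX₀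
  obtain ⟨b, hb, ht₁⟩ := hrep s₁ hs₁
  obtain ⟨b', hb', ht₂⟩ := hrep s₂ hs₂
  obtain rfl := card_le_one.1 hYX b hb b' hb'
  rcases hX (mem_of_mem_erase hs₁) ht₂ (mem_of_mem_erase hs₂) ht₁ (by abel) with ⟨h, -⟩ | ⟨h, -⟩
  · exact hne h
  · have hbx₀ : b = x₀ := add_left_cancel ((eq_sub_iff_add_eq.1 h).trans (add_comm _ _))
    exact (mem_sdiff.1 hb).2 (hbx₀ ▸ hx₀)

theorem IsSidon.eq_of_erase_subset {X Y : Finset G} (hX : IsSidon X) {x₀ : G} (hx₀ : x₀ ∈ X)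
    (hsub : X.erase x₀ ⊆ Y) (hcard : Y.card ≤ X.card) (hX₀ : 1 < (X.erase x₀).card)
    (hE : ∀ s ∈ X.erase x₀, x₀ + s ∈ EHat Y) : X = Y := by
  by_contra hXY
  have hx₀Y : x₀ ∉ Y := fun h => hXY <| eq_of_subset_of_card_le
    (fun x hx => if hxx : x = x₀ then hxx ▸ h else hsub (mem_erase.2 ⟨hxx, hx⟩)) hcard
  have hYX : (Y \ X).card ≤ 1 := by
    have := card_le_card (s := X.erase x₀) (t := Y ∩ X)
      fun x hx => mem_inter.2 ⟨hsub hx, mem_of_mem_erase hx⟩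
    have := card_inter_add_card_sdiff Y X
    have := card_erase_add_one hx₀
    omega
  obtain ⟨s, hs, hsY⟩ := hX.exists_add_notMem_EHat hx₀ hx₀Y hYX hX₀
  exact hsY (hE s hs)

theorem lt_two_mul_choose_two {m : ℕ} (hm : 8 ≤ m) :
    (m + 1).choose 2 + m < 2 * m.choose 2 := by
  have : ((m + 1).choose 2 + m : ℚ) < 2 * m.choose 2 := by
    rw [Nat.cast_choose_two, Nat.cast_choose_two]
    have : (8 : ℚ) ≤ m := by exact_mod_cast hm
    push_cast
    nlinarith
  exact_mod_cast this

theorem Dissociated.card_le_two_mul_card_EHat_sdiff_of_add_mem {X Y : Finset G}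
    (hX : Dissociated X) (hY : IsSidon Y) (hcard : X.card = Y.card) {x₀ c : G} (hx₀ : x₀ ∈ X)
    (hc : c + c ≠ 0) (h : ∀ x ∈ X.erase x₀, x + c ∈ Y) (hk : 9 ≤ X.card) :
    X.card ≤ 2 * (EHat X \ EHat Y).card := by
  have hXS := hX.isSidon
  have key := card_EHat_le_of_add_mem hX.threeAPFree_EHat (erase_subset x₀ X) hc h
  have hXe := card_erase_add_one hx₀
  rw [(hXS.mono (erase_subset x₀ X)).card_EHat, hXS.card_EHat, ← hXe,
    card_sdiff_comm (by rw [hXS.card_EHat, hY.card_EHat, hcard])] at key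
  have := lt_two_mul_choose_two (m := (X.erase x₀).card) (by omega)
  omega

theorem Dissociated.card_le_two_mul_card_EHat_sdiff {X Y : Finset G} (hX : Dissociated X)
    (hY : Dissociated Y) (hXY : X ≠ Y) (hcard : X.card = Y.card)
    (hG : ∀ g : G, g + g = 0 → g = 0) (hk : 9 ≤ X.card) :
    X.card ≤ 2 * (EHat X \ EHat Y).card := by
  by_contra! hu
  have hXS := hX.isSidon
  obtain ⟨x₀, hx₀, hx₀D⟩ := hXS.exists_forall_add_notMem hu
  have hx₀E : ∀ w ∈ X.erase x₀, x₀ + w ∈ EHat Y := fun w hw => by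
    by_contra h
    exact hx₀D w hw (mem_sdiff.2 ⟨mem_EHat.2 ⟨x₀, hx₀, w, mem_of_mem_erase hw,
      (ne_of_mem_erase hw).symm, rfl⟩, h⟩)
  have hXe := card_erase_add_one hx₀
  obtain ⟨c, hc⟩ := hY.exists_forall_add_mem hx₀E fun z₁ h₁ z₂ h₂ => by
    have := hXS.card_le_card_partners_inter (Y := Y) x₀ h₁ h₂
    omega
  by_cases hc0 : c = 0
  · subst hc0
    exact hXY (hXS.eq_of_erase_subset hx₀ (fun x hx => by simpa using hc x hx) hcard.ge
      (by omega) hx₀E)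
  · exact (not_le.2 hu) (hX.card_le_two_mul_card_EHat_sdiff_of_add_mem hY.isSidon hcard hx₀
      (fun h => hc0 (hG c h)) hc hk)

theorem distinct_dissociated_overlap_bound :
    ∃ k₀ : ℕ, ∀ k : ℕ, k₀ ≤ k →
      ∀ (G : Type) [AddCommGroup G] [Fintype G] [DecidableEq G],
        Nat.gcd (Fintype.card G) 6 = 1 →
        ∀ X Y : Finset G, Dissociated X → Dissociated Y → X ≠ Y →
          X.card = k → Y.card = k →
          ((EHat X ∩ EHat Y).card : ℝ) ≤ (k.choose 2 : ℝ) - (k : ℝ) / 2 := by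
  refine ⟨9, fun k hk G _ _ _ hgcd X Y hX hY hXY hXk hYk => ?_⟩
  have hG : ∀ g : G, g + g = 0 → g = 0 := by
    have h2 : (Nat.card G).Coprime 2 := by
      rw [Nat.card_eq_fintype_card]
      exact Nat.Coprime.coprime_dvd_right (by norm_num) hgcd
    exact fun g hg =>
      (Nat.Coprime.nsmul_right_bijective h2).injective (by simpa [two_nsmul] using hg)
  have hu := hX.card_le_two_mul_card_EHat_sdiff hY hXY (hXk.trans hYk.symm) hG (hXk ▸ hk)
  have hsplit := card_inter_add_card_sdiff (EHat X) (EHat Y)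
  rw [hX.isSidon.card_EHat, hXk] at hsplit
  rw [hXk] at hu
  have h₁ : ((EHat X ∩ EHat Y).card : ℝ) + (EHat X \ EHat Y).card = k.choose 2 := by
    exact_mod_cast hsplit
  have h₂ : (k : ℝ) ≤ 2 * (EHat X \ EHat Y).card := by exact_mod_cast hu
  linarith
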